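/- arXiv:2410.13193 — 2 statements merged into one kernel-verified Lean document; each statement's English description precedes it below -/
import Mathlib

section
/- Let ≈ be a reflexive symmetric relation on X and {Φ_x ⊆ Φ} a ≈-discriminative feature representation. Define cl(ξ) = {x : ξ ∈ Φ_x} and the new representation Φ̂_x = {cl(ξ) : ξ ∈ Φ_x}. Then {Φ̂_x} is again a ≈-discriminative feature representation: Φ̂_x ∩ Φ̂_y ≠ ∅ if and only if x ≈ y. -/
theorem cluster_representation_discriminative {X Φ : Type*}
    (r : X → X → Prop) (hrefl : Reflexive r) (hsymm : Symmetric r)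
    (F : X → Set Φ)
    (hdisc : ∀ x y, (F x ∩ F y).Nonempty ↔ r x y) :
    ∀ x y : X,
      (((fun ξ => {z : X | ξ ∈ F z}) '' F x ∩
        (fun ξ => {z : X | ξ ∈ F z}) '' F y).Nonempty ↔ r x y) := by
  intro x y
  constructor
  · rintro ⟨S, ⟨ξ, hξ, hξS⟩, ⟨η, hη, hηS⟩⟩
    have hx : x ∈ S := hξS ▸ hξ
    have : η ∈ F x := by
      have := hηS ▸ hx
      exact this
    exact (hdisc x y).mp ⟨η, this, hη⟩
  · intro hr
    obtain ⟨ξ, hξx, hξy⟩ := (hdisc x y).mpr hr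
    exact ⟨{z | ξ ∈ F z}, ⟨ξ, hξx, rfl⟩, ⟨ξ, hξy, rfl⟩⟩
end

section
/- Let X be a probability space, ≈ reflexive symmetric with D(x) = {y : y ≈ x} measurable and μ(D(x)) > 0 for all x, and Ω a regular world model with k̄ = sup_x μ(Ω_{i(x)})/μ(D(x)) < ∞. If R is a classifier whose recall rates are all ≤ ρ̄ with ρ̄·k̄ < 1, then for every correctly classified input x (x ∈ R_{i(x)}), μ(D(x) ∩ R_{i(x)}) / μ(D(x)) ≤ ρ̄·k̄ < 1, hence D(x) \ R_{i(x)} has positive measure and x has an adversarial doppelgänger. -/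
/-!
A correctly classified input `x` lies in `R (i x)`, and by regularity its doppelgänger set `D x`
sits inside `Ω (i x)`. Hence the part of `D x` classified like `x` is at most
`μ (R (i x) ∩ Ω (i x)) ≤ ρ μ (Ω (i x)) ≤ ρ k μ (D x)`. As `ρ k < 1`, this is a proper fraction of
`μ (D x) > 0`, so `D x \ R (i x)` carries positive mass.
-/

open MeasureTheory

namespace MeasureTheory

variable {X : Type*} [MeasurableSpace X] {μ : Measure X} [IsFiniteMeasure μ]

theorem toReal_measure_inter_le_of_subset_of_recall_le {s Ω R : Set X} {ρ k : ℝ}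
    (hρ : 0 ≤ ρ) (hsΩ : s ⊆ Ω)
    (hrecall : (μ (R ∩ Ω)).toReal ≤ ρ * (μ Ω).toReal)
    (hΩs : (μ Ω).toReal ≤ k * (μ s).toReal) :
    (μ (s ∩ R)).toReal ≤ ρ * k * (μ s).toReal :=
  calc (μ (s ∩ R)).toReal
      ≤ (μ (R ∩ Ω)).toReal :=
        ENNReal.toReal_mono (measure_ne_top μ _)
          (measure_mono fun _ hy => ⟨hy.2, hsΩ hy.1⟩)
    _ ≤ ρ * (μ Ω).toReal := hrecall
    _ ≤ ρ * (k * (μ s).toReal) := mul_le_mul_of_nonneg_left hΩs hρ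
    _ = ρ * k * (μ s).toReal := (mul_assoc ..).symm

theorem measure_diff_pos_of_toReal_measure_inter_le {s t : Set X} {c : ℝ} (hc : c < 1)
    (hs : 0 < μ s) (hst : (μ (s ∩ t)).toReal ≤ c * (μ s).toReal) :
    0 < μ (s \ t) := by
  refine pos_iff_ne_zero.mpr fun hnull => ?_
  have hs_le : μ s ≤ μ (s ∩ t) :=
    calc μ s = μ (s ∩ t ∪ s \ t) := by rw [Set.inter_union_sdiff]
      _ ≤ μ (s ∩ t) + μ (s \ t) := measure_union_le _ _
      _ = μ (s ∩ t) := by rw [hnull, add_zero]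
  have hs_pos : 0 < (μ s).toReal := ENNReal.toReal_pos hs.ne' (measure_ne_top μ s)
  exact (mul_lt_of_lt_one_left hs_pos hc).not_ge <|
    (ENNReal.toReal_mono (measure_ne_top μ _) hs_le).trans hst

end MeasureTheory

theorem low_recall_correct_inputs_have_adversarial_doppelgangers_general
    {X : Type*} [MeasurableSpace X]
    (μ : Measure X) [IsProbabilityMeasure μ] {m : ℕ}
    (D : X → Set X)
    (hDpos : ∀ x, 0 < μ (D x))
    (Ω : Fin m → Set X)
    (i : X → Fin m)
    (hreg : ∀ x, D x ⊆ Ω (i x))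
    (R : Fin m → Set X)
    (k : ℝ)
    (hksup : ∀ x, (μ (Ω (i x))).toReal ≤ k * (μ (D x)).toReal)
    (ρ : ℝ) (hρ : 0 ≤ ρ) (hρk : ρ * k < 1)
    (hrecall : ∀ j, (μ (R j ∩ Ω j)).toReal ≤ ρ * (μ (Ω j)).toReal) :
    ∀ x : X, x ∈ R (i x) →
      (μ (D x ∩ R (i x))).toReal ≤ ρ * k * (μ (D x)).toReal ∧
      0 < μ (D x \ R (i x)) := by
  intro x _
  have hbound := toReal_measure_inter_le_of_subset_of_recall_le hρ (hreg x)
    (hrecall (i x)) (hksup x)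
  exact ⟨hbound, measure_diff_pos_of_toReal_measure_inter_le hρk (hDpos x) hbound⟩

theorem low_recall_correct_inputs_have_adversarial_doppelgangers
    {X : Type*} [MeasurableSpace X]
    (μ : Measure X) [IsProbabilityMeasure μ] {m : ℕ}
    (r : X → X → Prop) (hrefl : Reflexive r) (hsymm : Symmetric r)
    (D : X → Set X) (hD : ∀ x, D x = {y | r y x})
    (hDmeas : ∀ x, MeasurableSet (D x))
    (hDpos : ∀ x, 0 < μ (D x))
    (Ω : Fin m → Set X) (hΩmeas : ∀ j, MeasurableSet (Ω j))
    (hΩpos : ∀ j, 0 < μ (Ω j))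
    (i : X → Fin m) (hi : ∀ x, x ∈ Ω (i x))
    (hreg : ∀ x, D x ⊆ Ω (i x))
    (R : Fin m → Set X) (hRmeas : ∀ j, MeasurableSet (R j))
    (k : ℝ) (hk : 0 < k)
    (hksup : ∀ x, (μ (Ω (i x))).toReal ≤ k * (μ (D x)).toReal)
    (ρ : ℝ) (hρ : 0 ≤ ρ) (hρk : ρ * k < 1)
    (hrecall : ∀ j, (μ (R j ∩ Ω j)).toReal ≤ ρ * (μ (Ω j)).toReal) :
    ∀ x : X, x ∈ R (i x) →
      (μ (D x ∩ R (i x))).toReal ≤ ρ * k * (μ (D x)).toReal ∧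
      0 < μ (D x \ R (i x)) :=
  low_recall_correct_inputs_have_adversarial_doppelgangers_general μ D hDpos Ω i hreg R k hksup ρ hρ
    hρk hrecall
end
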